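/- The function V_ε (defined as in the preceding context) is continuous on the set {(u, u_L, u_R) ∈ ℝ³ : u_L ≥ u_R}; in particular, V_ε vanishes on a neighborhood of the set where η(u|u_R) = η(u|u_L). -/

import Mathlib

/-!
Fix `u` and regard `c ↦ η(u|c)` and `c ↦ q(u;c)` as functions of the base point. Their
derivatives are `-η''(c) (u - c)` and `-η''(c) (A u - A c)`, so
`c ↦ q(u;c) - A'(u) η(u|c)` has derivative `-η''(c) (A u - A c - A'(u) (u - c)) ≥ 0` by convexity
of `η` and `A`. It is therefore monotone, and between two base points `u_R ≤ u_L` with equal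
relative entropies this gives `q(u;u_R) ≤ q(u;u_L)`. Hence the numerator of `V_ε` is at most
`-ε < 0` on the zero set of the denominator, and, being continuous, stays negative on an open
neighbourhood of it, where `V_ε = 0`. Away from that zero set `V_ε` is a quotient of continuous
functions with nonvanishing denominator.
-/

noncomputable def Veps (A η q : ℝ → ℝ) (ε : ℝ) (p : ℝ × ℝ × ℝ) : ℝ :=
  if (η p.1 - η p.2.2 - deriv η p.2.2 * (p.1 - p.2.2)) -
      (η p.1 - η p.2.1 - deriv η p.2.1 * (p.1 - p.2.1)) = 0 then 0
  else
    max 0 ((q p.1 - q p.2.2 - deriv η p.2.2 * (A p.1 - A p.2.2)) -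
        (q p.1 - q p.2.1 - deriv η p.2.1 * (A p.1 - A p.2.1)) - ε) /
      ((η p.1 - η p.2.2 - deriv η p.2.2 * (p.1 - p.2.2)) -
        (η p.1 - η p.2.1 - deriv η p.2.1 * (p.1 - p.2.1)))

open Set

section TruncatedQuotient

variable {X : Type*} {N D : X → ℝ} {ε : ℝ}

noncomputable def truncQuot (N D : X → ℝ) (ε : ℝ) (x : X) : ℝ :=
  if D x = 0 then 0 else max 0 (N x - ε) / D x

lemma truncQuot_eq_zero_of_lt {x : X} (h : N x < ε) : truncQuot N D ε x = 0 := by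
  unfold truncQuot
  split_ifs
  · rfl
  · rw [max_eq_left (sub_neg.2 h).le, zero_div]

lemma continuousAt_truncQuot [TopologicalSpace X] (hN : Continuous N) (hD : Continuous D) {p : X}
    (hp : D p ≠ 0 ∨ N p < ε) : ContinuousAt (truncQuot N D ε) p := by
  rcases hp with hDp | hNp
  · have hquot : ContinuousAt (fun x => max 0 (N x - ε) / D x) p :=
      (continuous_const.max (hN.sub continuous_const)).continuousAt.div hD.continuousAt hDp
    refine hquot.congr ?_
    filter_upwards [hD.continuousAt.eventually_ne hDp] with x hx
    rw [truncQuot, if_neg hx]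
  · have hzero : truncQuot N D ε =ᶠ[nhds p] fun _ => 0 := by
      filter_upwards [(isOpen_lt hN continuous_const).mem_nhds hNp] with x hx
      exact truncQuot_eq_zero_of_lt hx
    exact continuousAt_const.congr hzero.symm

end TruncatedQuotient

lemma ConvexOn.add_deriv_mul_sub_le {f : ℝ → ℝ} (hf : ConvexOn ℝ univ f) {x : ℝ}
    (hfd : DifferentiableAt ℝ f x) (y : ℝ) : f x + deriv f x * (y - x) ≤ f y := by
  rcases lt_trichotomy x y with hxy | rfl | hyx
  · have h := hf.deriv_le_slope (mem_univ x) (mem_univ y) hxy hfd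
    rw [slope_def_field, le_div_iff₀ (sub_pos.2 hxy)] at h
    linarith
  · simp
  · have h := hf.slope_le_deriv (mem_univ y) (mem_univ x) hyx hfd
    rw [slope_def_field, div_le_iff₀ (sub_pos.2 hyx)] at h
    linarith

section RelativeEntropy

variable {A η q : ℝ → ℝ}

/-- The relative entropy `η(u|c)`. -/
noncomputable def relEntropy (η : ℝ → ℝ) (u c : ℝ) : ℝ :=
  η u - η c - deriv η c * (u - c)

/-- The relative entropy flux `q(u;c)`. -/
noncomputable def relFlux (A η q : ℝ → ℝ) (u c : ℝ) : ℝ :=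
  q u - q c - deriv η c * (A u - A c)

lemma Veps_eq_truncQuot (ε : ℝ) :
    Veps A η q ε = truncQuot (fun p => relFlux A η q p.1 p.2.2 - relFlux A η q p.1 p.2.1)
      (fun p => relEntropy η p.1 p.2.2 - relEntropy η p.1 p.2.1) ε :=
  rfl

lemma hasDerivAt_relEntropy {c : ℝ} (hηd : DifferentiableAt ℝ η c)
    (hη'd : DifferentiableAt ℝ (deriv η) c) (u : ℝ) :
    HasDerivAt (relEntropy η u) (-(deriv (deriv η) c * (u - c))) c := by
  have h := ((hasDerivAt_const c (η u)).sub hηd.hasDerivAt).sub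
    (hη'd.hasDerivAt.mul ((hasDerivAt_const c u).sub (hasDerivAt_id c)))
  exact h.congr_deriv (by simp only [Pi.sub_apply, id_eq]; ring)

lemma hasDerivAt_relFlux {c : ℝ} (hq : HasDerivAt q (deriv η c * deriv A c) c)
    (hη'd : DifferentiableAt ℝ (deriv η) c) (hAd : DifferentiableAt ℝ A c) (u : ℝ) :
    HasDerivAt (relFlux A η q u) (-(deriv (deriv η) c * (A u - A c))) c := by
  have h := ((hasDerivAt_const c (q u)).sub hq).sub
    (hη'd.hasDerivAt.mul ((hasDerivAt_const c (A u)).sub hAd.hasDerivAt))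
  exact h.congr_deriv (by simp only [Pi.sub_apply]; ring)

theorem relFlux_le_of_relEntropy_eq (hηd : Differentiable ℝ η)
    (hη'd : Differentiable ℝ (deriv η)) (hηc : ConvexOn ℝ univ η)
    (hAd : Differentiable ℝ A) (hAc : ConvexOn ℝ univ A)
    (hq : ∀ c, HasDerivAt q (deriv η c * deriv A c) c) {u uL uR : ℝ} (hle : uR ≤ uL)
    (heq : relEntropy η u uR = relEntropy η u uL) :
    relFlux A η q u uR ≤ relFlux A η q u uL := by
  have hη'' : ∀ c, 0 ≤ deriv (deriv η) c :=
    fun c => (monotoneOn_univ.1 (hηc.monotoneOn_deriv fun x _ => hηd x)).deriv_nonneg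
  have hmono : Monotone fun c => relFlux A η q u c - deriv A u * relEntropy η u c := by
    refine monotone_of_hasDerivAt_nonneg (fun c =>
      (hasDerivAt_relFlux (hq c) (hη'd c) (hAd c) u).sub
        ((hasDerivAt_relEntropy (hηd c) (hη'd c) u).const_mul (deriv A u))) fun c => ?_
    have htangent := hAc.add_deriv_mul_sub_le (hAd u) c
    have : 0 ≤ deriv (deriv η) c * (A c - A u - deriv A u * (c - u)) :=
      mul_nonneg (hη'' c) (by linarith)
    simp only [Pi.zero_apply]
    linarith
  have hφ := hmono hle
  simp only [heq] at hφ
  linarith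

end RelativeEntropy

theorem stmt_13 (A η q : ℝ → ℝ)
    (hA : ContDiff ℝ 2 A) (hAc : StrictConvexOn ℝ Set.univ A)
    (hη : ContDiff ℝ 2 η) (hηc : StrictConvexOn ℝ Set.univ η)
    (hqd : Differentiable ℝ q)
    (hq : ∀ u, deriv q u = deriv η u * deriv A u)
    (ε : ℝ) (hε : 0 < ε) :
    ContinuousOn (Veps A η q ε) {p : ℝ × ℝ × ℝ | p.2.2 ≤ p.2.1} ∧
      ∃ U : Set (ℝ × ℝ × ℝ), IsOpen U ∧
        {p : ℝ × ℝ × ℝ | p.2.2 ≤ p.2.1 ∧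
            (η p.1 - η p.2.2 - deriv η p.2.2 * (p.1 - p.2.2)) -
              (η p.1 - η p.2.1 - deriv η p.2.1 * (p.1 - p.2.1)) = 0} ⊆ U ∧
        ∀ p ∈ U, Veps A η q ε p = 0 := by
  set N := fun p : ℝ × ℝ × ℝ => relFlux A η q p.1 p.2.2 - relFlux A η q p.1 p.2.1
  set D := fun p : ℝ × ℝ × ℝ => relEntropy η p.1 p.2.2 - relEntropy η p.1 p.2.1
  have hN : Continuous N := by
    have := hη.continuous_deriv one_le_two
    have := hA.continuous
    have := hqd.continuous
    simp only [N, relFlux]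
    fun_prop
  have hD : Continuous D := by
    have := hη.continuous_deriv one_le_two
    simp only [D, relEntropy]
    fun_prop
  have hzero_set : ∀ p : ℝ × ℝ × ℝ, p.2.2 ≤ p.2.1 → D p = 0 → N p < ε := fun p hle hDp =>
    (sub_nonpos.2 (relFlux_le_of_relEntropy_eq (hη.differentiable two_ne_zero)
      hη.differentiable_deriv_two hηc.convexOn (hA.differentiable two_ne_zero) hAc.convexOn
      (fun c => hq c ▸ (hqd c).hasDerivAt) hle (sub_eq_zero.1 hDp))).trans_lt hε
  rw [Veps_eq_truncQuot]
  refine ⟨fun p hp => (continuousAt_truncQuot hN hD ?_).continuousWithinAt,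
    {p | N p < ε}, isOpen_lt hN continuous_const, fun p hp => hzero_set p hp.1 hp.2,
    fun p hp => truncQuot_eq_zero_of_lt hp⟩
  by_cases hDp : D p = 0
  · exact Or.inr (hzero_set p hp hDp)
  · exact Or.inl hDp
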